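/- Let g : ℝ^{d_β}×ℝ^{d_π} → ℝ^{d_g} be continuously differentiable near (β_0,π_0) with derivative [G_β, G_π], let Θ = {(β,π) : g(β,π) ≤ 0}, and let (β_n,π_n) ∈ Θ with (β_n,π_n) → (β_0,π_0). Let a_n → ∞ with a_n/√n → 0 and suppose a_n · g(β_n,π_n) → b componentwise with b ∈ [−∞,0]^{d_g}, and there exists λ̃ ∈ B^{SS} = {λ ∈ ℝ^{d_β} : b + G_β(β_0,π_0)λ ≤ 0} with e_j'b + e_j'G_β(β_0,π_0)λ̃ < 0 for every j with b_j > −∞. Then the sets Λ_n^{SS} = {(a_n(β−β_n), √n(π−π_n)) : (β,π) ∈ Θ} converge in the Painlevé–Kuratowski sense to B^{SS} × ℝ^{d_π}. -/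

import Mathlib

/-!
Write `θ_n = (β_n, π_n)` and `q = θ_n + (λ / a_n, v / √n)`, so that
`a_n (q - θ_n) = (λ, (a_n / √n) v) → (λ, 0)`. Strict differentiability of `g` at `θ₀` gives
`a_n (g q - g θ_n) → G_β λ`, hence `a_n g(q)_j → b_j + (G_β λ)_j` in `EReal`. Along points of
`Λ_n` converging to `(λ, v)` the left side is `≤ 0`, which bounds the limsup. Conversely, when the
limit is `< 0` for every `j`, the point `(λ, v)` itself lies in `Λ_n` for large `n`; by the
constraint qualification this holds at every point of the segment from `λ` to `λ̃` except `λ`,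
which is then reached because the PK liminf is closed.
-/

open Filter Topology Set Metric

/-- The Painlevé–Kuratowski limsup of a sequence of sets:
points whose distance to `A n` has liminf zero. -/
def pkLimsup {H : Type*} [PseudoEMetricSpace H] (A : ℕ → Set H) : Set H :=
  {h | Filter.atTop.liminf (fun n => EMetric.infEdist h (A n)) = 0}

/-- The Painlevé–Kuratowski liminf of a sequence of sets:
points whose distance to `A n` tends to zero. -/
def pkLiminf {H : Type*} [PseudoEMetricSpace H] (A : ℕ → Set H) : Set H :=
  {h | Tendsto (fun n => EMetric.infEdist h (A n)) atTop (𝓝 0)}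

/-- Painlevé–Kuratowski convergence: limsup and liminf both equal the limit set. -/
def PKTendsto {H : Type*} [PseudoEMetricSpace H] (A : ℕ → Set H) (L : Set H) : Prop :=
  pkLimsup A = L ∧ pkLiminf A = L

open scoped ENNReal

section PainleveKuratowski

variable {H : Type*} [PseudoEMetricSpace H] {A : ℕ → Set H} {L : Set H} {x : H}

lemma pkLiminf_subset_pkLimsup : pkLiminf A ⊆ pkLimsup A := fun _ hx => hx.liminf_eq

lemma pkTendsto_of_pkLimsup_subset_of_subset_pkLiminf (hsup : pkLimsup A ⊆ L)
    (hinf : L ⊆ pkLiminf A) : PKTendsto A L :=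
  ⟨hsup.antisymm (hinf.trans pkLiminf_subset_pkLimsup),
    (pkLiminf_subset_pkLimsup.trans hsup).antisymm hinf⟩

lemma isClosed_pkLiminf : IsClosed (pkLiminf A) := by
  refine isClosed_of_closure_subset fun x hx => ENNReal.tendsto_nhds_zero.2 fun ε hε => ?_
  obtain ⟨y, hy, hxy⟩ := EMetric.mem_closure_iff.1 hx (ε / 2) (ENNReal.half_pos hε.ne')
  filter_upwards [ENNReal.tendsto_nhds_zero.1 hy (ε / 2) (ENNReal.half_pos hε.ne')] with n hn
  calc infEDist x (A n) ≤ edist x y + infEDist y (A n) :=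
        infEDist_le_edist_add_infEDist
    _ ≤ ε / 2 + ε / 2 := add_le_add hxy.le hn
    _ = ε := ENNReal.add_halves ε

lemma mem_pkLiminf_of_eventually_mem (hx : ∀ᶠ n in atTop, x ∈ A n) : x ∈ pkLiminf A :=
  tendsto_const_nhds.congr' (hx.mono fun _ hn => (infEDist_zero_of_mem hn).symm)

lemma exists_tendsto_of_mem_pkLimsup (hx : x ∈ pkLimsup A) :
    ∃ φ : ℕ → ℕ, StrictMono φ ∧ ∃ y : ℕ → H, (∀ k, y k ∈ A (φ k)) ∧ Tendsto y atTop (𝓝 x) := by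
  have hfreq (k : ℕ) : ∃ᶠ n in atTop, infEDist x (A n) < (k : ℝ≥0∞)⁻¹ :=
    frequently_lt_of_liminf_lt (by isBoundedDefault)
      (hx.trans_lt (ENNReal.inv_pos.2 (ENNReal.natCast_ne_top k)))
  obtain ⟨φ, hφ, hφA⟩ := extraction_forall_of_frequently hfreq
  choose y hyA hxy using fun k => infEDist_lt_iff.1 (hφA k)
  refine ⟨φ, hφ, y, hyA, tendsto_iff_edist_tendsto_0.2 ?_⟩
  exact tendsto_of_tendsto_of_tendsto_of_le_of_le tendsto_const_nhds
    ENNReal.tendsto_inv_nat_nhds_zero (fun _ => zero_le)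
    fun k => (edist_comm (y k) x).trans_le (hxy k).le

end PainleveKuratowski

lemma HasStrictFDerivAt.tendsto_smul_sub {𝕜 E F α : Type*} [NontriviallyNormedField 𝕜]
    [NormedAddCommGroup E] [NormedSpace 𝕜 E] [NormedAddCommGroup F] [NormedSpace 𝕜 F]
    {f : E → F} {f' : E →L[𝕜] F} {x₀ : E} (hf : HasStrictFDerivAt f f' x₀) {l : Filter α}
    {c : α → 𝕜} {x y : α → E} {w : E} (hx : Tendsto x l (𝓝 x₀)) (hy : Tendsto y l (𝓝 x₀))
    (hw : Tendsto (fun k => c k • (y k - x k)) l (𝓝 w)) :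
    Tendsto (fun k => c k • (f (y k) - f (x k))) l (𝓝 (f' w)) := by
  have hrem : (fun k => c k • (f (y k) - f (x k) - f' (y k - x k))) =o[l] fun _ => (1 : ℝ) :=
    ((Asymptotics.isBigO_refl c l).smul_isLittleO
      ((hasStrictFDerivAt_iff_isLittleO.1 hf).comp_tendsto (hy.prodMk_nhds hx))).trans_isBigO
      (hw.isBigO_one ℝ)
  have hlim := (Asymptotics.isLittleO_one_iff ℝ).1 hrem |>.add ((f'.continuous.tendsto w).comp hw)
  rw [zero_add] at hlim
  refine hlim.congr fun k => ?_
  simp only [Function.comp_apply, map_smul, ← smul_add, sub_add_cancel]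

lemma tendsto_of_tendsto_smul_sub {E α : Type*} [NormedAddCommGroup E] [NormedSpace ℝ E]
    {l : Filter α} {c : α → ℝ} {x y : α → E} {x₀ u : E} (hc : Tendsto c l atTop)
    (hx : Tendsto x l (𝓝 x₀)) (h : Tendsto (fun k => c k • (y k - x k)) l (𝓝 u)) :
    Tendsto y l (𝓝 x₀) := by
  have hlim := hx.add ((tendsto_inv_atTop_zero.comp hc).smul h)
  rw [zero_smul, add_zero] at hlim
  refine hlim.congr' ?_
  filter_upwards [hc.eventually_gt_atTop 0] with k hk
  simp [inv_smul_smul₀ hk.ne']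

lemma EReal.add_coe_lt_zero_of_segment {b : EReal} {x y t : ℝ} (ht₀ : 0 < t) (ht₁ : t ≤ 1)
    (hx : b + x ≤ 0) (hy : b + y < 0) : b + ↑(x + t * (y - x)) < 0 := by
  induction b using EReal.rec with
  | bot => simp
  | coe b =>
    norm_cast at hx hy ⊢
    nlinarith
  | top => simp at hy

section SemiStrongScaling

variable {Eβ Eπ : Type*} [NormedAddCommGroup Eβ] [NormedSpace ℝ Eβ]
  [NormedAddCommGroup Eπ] [NormedSpace ℝ Eπ]

noncomputable def semiStrongScaling (a : ℕ → ℝ) (βn : ℕ → Eβ) (πn : ℕ → Eπ) (n : ℕ) (q : Eβ × Eπ) :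
    Eβ × Eπ :=
  (a n • (q.1 - βn n), √n • (q.2 - πn n))

variable {a : ℕ → ℝ} {βn : ℕ → Eβ} {πn : ℕ → Eπ} {β₀ : Eβ} {π₀ : Eπ}
  {α : Type*} {l : Filter α} {φ : α → ℕ} {q : α → Eβ × Eπ} {μ : Eβ} {v : Eπ}

lemma tendsto_of_tendsto_semiStrongScaling (ha_inf : Tendsto a atTop atTop)
    (ha_slow : Tendsto (fun n : ℕ => a n / √n) atTop (𝓝 0))
    (hθn : Tendsto (fun n => (βn n, πn n)) atTop (𝓝 (β₀, π₀))) (hφ : Tendsto φ l atTop)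
    (hq : Tendsto (fun k => semiStrongScaling a βn πn (φ k) (q k)) l (𝓝 (μ, v))) :
    Tendsto q l (𝓝 (β₀, π₀)) ∧
      Tendsto (fun k => a (φ k) • (q k - (βn (φ k), πn (φ k)))) l (𝓝 (μ, 0)) := by
  have hsqrt : Tendsto (fun k => √(φ k : ℝ)) l atTop :=
    (Real.tendsto_sqrt_atTop.comp tendsto_natCast_atTop_atTop).comp hφ
  have hq₁ : Tendsto (fun k => a (φ k) • ((q k).1 - βn (φ k))) l (𝓝 μ) := hq.fst_nhds
  have hq₂ : Tendsto (fun k => √(φ k : ℝ) • ((q k).2 - πn (φ k))) l (𝓝 v) := hq.snd_nhds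
  have hw₂ : Tendsto (fun k => a (φ k) • ((q k).2 - πn (φ k))) l (𝓝 0) := by
    have hlim := (ha_slow.comp hφ).smul hq₂
    rw [zero_smul] at hlim
    refine hlim.congr' ?_
    filter_upwards [hsqrt.eventually_gt_atTop 0] with k hk
    simp [smul_smul, div_mul_cancel₀ _ hk.ne']
  exact ⟨(tendsto_of_tendsto_smul_sub (ha_inf.comp hφ) (hθn.fst_nhds.comp hφ) hq₁).prodMk_nhds
      (tendsto_of_tendsto_smul_sub hsqrt (hθn.snd_nhds.comp hφ) hq₂), hq₁.prodMk_nhds hw₂⟩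

variable {ι : Type*} [Fintype ι] {g : Eβ × Eπ → ι → ℝ} {G₀ : Eβ × Eπ →L[ℝ] ι → ℝ}
  {b : ι → EReal}

lemma tendsto_mul_constraint_of_tendsto_semiStrongScaling
    (hg : HasStrictFDerivAt g G₀ (β₀, π₀)) (ha_inf : Tendsto a atTop atTop)
    (ha_slow : Tendsto (fun n : ℕ => a n / √n) atTop (𝓝 0))
    (hθn : Tendsto (fun n => (βn n, πn n)) atTop (𝓝 (β₀, π₀)))
    (hb : ∀ j, Tendsto (fun n => ((a n * g (βn n, πn n) j : ℝ) : EReal)) atTop (𝓝 (b j)))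
    (hφ : Tendsto φ l atTop)
    (hq : Tendsto (fun k => semiStrongScaling a βn πn (φ k) (q k)) l (𝓝 (μ, v))) (j : ι) :
    Tendsto (fun k => ((a (φ k) * g (q k) j : ℝ) : EReal)) l (𝓝 (b j + G₀ (μ, 0) j)) := by
  obtain ⟨hq₀, hw⟩ := tendsto_of_tendsto_semiStrongScaling ha_inf ha_slow hθn hφ hq
  have hdiff : Tendsto (fun k => a (φ k) * (g (q k) j - g (βn (φ k), πn (φ k)) j)) l
      (𝓝 (G₀ (μ, 0) j)) :=
    ((continuous_apply j).tendsto _).comp (hg.tendsto_smul_sub (hθn.comp hφ) hq₀ hw)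
  have hsum := (EReal.continuousAt_add (Or.inr (EReal.coe_ne_bot _))
    (Or.inr (EReal.coe_ne_top _))).tendsto.comp
      (((hb j).comp hφ).prodMk_nhds ((continuous_coe_real_ereal.tendsto _).comp hdiff))
  refine hsum.congr fun k => ?_
  simp only [Function.comp_apply, ← EReal.coe_add]
  ring_nf


lemma pkLimsup_semiStrongScaling_subset (hg : HasStrictFDerivAt g G₀ (β₀, π₀))
    (ha_inf : Tendsto a atTop atTop) (ha_slow : Tendsto (fun n : ℕ => a n / √n) atTop (𝓝 0))
    (hθn : Tendsto (fun n => (βn n, πn n)) atTop (𝓝 (β₀, π₀)))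
    (hb : ∀ j, Tendsto (fun n => ((a n * g (βn n, πn n) j : ℝ) : EReal)) atTop (𝓝 (b j))) :
    pkLimsup (fun n => semiStrongScaling a βn πn n '' {q | ∀ j, g q j ≤ 0}) ⊆
      {μ | ∀ j, b j + G₀ (μ, 0) j ≤ 0} ×ˢ univ := by
  rintro ⟨μ, v⟩ hμv
  obtain ⟨φ, hφ, p, hpΛ, hp⟩ := exists_tendsto_of_mem_pkLimsup hμv
  choose q hqΘ hqp using hpΛ
  have hφ_tendsto := hφ.tendsto_atTop
  refine ⟨fun j => le_of_tendsto (tendsto_mul_constraint_of_tendsto_semiStrongScaling hg ha_inf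
    ha_slow hθn hb hφ_tendsto (hp.congr fun k => (hqp k).symm) j) ?_, mem_univ v⟩
  filter_upwards [(ha_inf.comp hφ_tendsto).eventually_ge_atTop 0] with k hk
  exact EReal.coe_nonpos.2 (mul_nonpos_of_nonneg_of_nonpos hk (hqΘ k j))

lemma eventually_mem_semiStrongScaling_image (hg : HasStrictFDerivAt g G₀ (β₀, π₀))
    (ha_inf : Tendsto a atTop atTop) (ha_slow : Tendsto (fun n : ℕ => a n / √n) atTop (𝓝 0))
    (hθn : Tendsto (fun n => (βn n, πn n)) atTop (𝓝 (β₀, π₀)))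
    (hb : ∀ j, Tendsto (fun n => ((a n * g (βn n, πn n) j : ℝ) : EReal)) atTop (𝓝 (b j)))
    (hμ : ∀ j, b j + G₀ (μ, 0) j < 0) (v : Eπ) :
    ∀ᶠ n in atTop, (μ, v) ∈ semiStrongScaling a βn πn n '' {q | ∀ j, g q j ≤ 0} := by
  set q : ℕ → Eβ × Eπ := fun n => (βn n + (a n)⁻¹ • μ, πn n + (√n)⁻¹ • v)
  have hq : ∀ᶠ n in atTop, semiStrongScaling a βn πn n (q n) = (μ, v) := by
    filter_upwards [ha_inf.eventually_gt_atTop 0, eventually_gt_atTop 0] with n ha hn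
    simp [q, semiStrongScaling, ha.ne', hn.ne']
  have hqΘ (j : ι) : ∀ᶠ n in atTop, g (q n) j ≤ 0 := by
    filter_upwards [(tendsto_mul_constraint_of_tendsto_semiStrongScaling hg ha_inf ha_slow hθn
      hb tendsto_id (tendsto_const_nhds.congr' (hq.mono fun _ hn => hn.symm)) j).eventually_lt_const
        (hμ j), ha_inf.eventually_gt_atTop 0] with n hn ha
    exact (neg_of_mul_neg_right (EReal.coe_neg'.1 hn) ha.le).le
  filter_upwards [hq, eventually_all.2 hqΘ] with n hn hnΘ
  exact ⟨q n, hnΘ, hn⟩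

lemma subset_pkLiminf_semiStrongScaling (hg : HasStrictFDerivAt g G₀ (β₀, π₀))
    (ha_inf : Tendsto a atTop atTop) (ha_slow : Tendsto (fun n : ℕ => a n / √n) atTop (𝓝 0))
    (hθn : Tendsto (fun n => (βn n, πn n)) atTop (𝓝 (β₀, π₀)))
    (hb : ∀ j, Tendsto (fun n => ((a n * g (βn n, πn n) j : ℝ) : EReal)) atTop (𝓝 (b j)))
    (hCQ : ∃ μ, ∀ j, b j + G₀ (μ, 0) j < 0) :
    {μ | ∀ j, b j + G₀ (μ, 0) j ≤ 0} ×ˢ univ ⊆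
      pkLiminf (fun n => semiStrongScaling a βn πn n '' {q | ∀ j, g q j ≤ 0}) := by
  rintro ⟨μ, v⟩ ⟨hμ, -⟩
  obtain ⟨μ', hμ'⟩ := hCQ
  have hsegment : ∀ t ∈ Ioc (0 : ℝ) 1, (μ + t • (μ' - μ), v) ∈
      pkLiminf (fun n => semiStrongScaling a βn πn n '' {q | ∀ j, g q j ≤ 0}) := by
    rintro t ⟨ht₀, ht₁⟩
    refine mem_pkLiminf_of_eventually_mem (eventually_mem_semiStrongScaling_image hg ha_inf
      ha_slow hθn hb (fun j => ?_) v)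
    have hlin : G₀ (μ + t • (μ' - μ), 0) j = G₀ (μ, 0) j + t * (G₀ (μ', 0) j - G₀ (μ, 0) j) := by
      have hpt : ((μ + t • (μ' - μ), 0) : Eβ × Eπ) = (μ, 0) + t • ((μ', 0) - (μ, 0)) := by simp
      rw [hpt, map_add, map_smul, map_sub]
      rfl
    rw [hlin]
    exact EReal.add_coe_lt_zero_of_segment ht₀ ht₁ (hμ j) (hμ' j)
  have hlim : Tendsto (fun t : ℝ => (μ + t • (μ' - μ), v)) (𝓝[>] 0) (𝓝 (μ, v)) := by
    have h := ((continuous_const.add (continuous_id.smul continuous_const)).prodMk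
      continuous_const).tendsto (0 : ℝ) (f := fun t : ℝ => (μ + t • (μ' - μ), v))
    simpa using h.mono_left nhdsWithin_le_nhds
  exact isClosed_pkLiminf.mem_of_tendsto hlim (mem_of_superset (Ioc_mem_nhdsGT one_pos) hsegment)

end SemiStrongScaling

theorem pk_semi_strong_scaling_general {dβ dπ dg : ℕ}
    (g : ((Fin dβ → ℝ) × (Fin dπ → ℝ)) → (Fin dg → ℝ))
    (β₀ : Fin dβ → ℝ) (π₀ : Fin dπ → ℝ)
    (U : Set ((Fin dβ → ℝ) × (Fin dπ → ℝ))) (hU : IsOpen U) (hθ₀U : (β₀, π₀) ∈ U)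
    (G : ((Fin dβ → ℝ) × (Fin dπ → ℝ)) →
      (((Fin dβ → ℝ) × (Fin dπ → ℝ)) →L[ℝ] (Fin dg → ℝ)))
    (hderiv : ∀ θ ∈ U, HasFDerivAt g (G θ) θ)
    (hGcont : ContinuousOn G U)
    (βn : ℕ → (Fin dβ → ℝ)) (πn : ℕ → (Fin dπ → ℝ))
    (hθn : Tendsto (fun n => (βn n, πn n)) atTop (𝓝 (β₀, π₀)))
    (a : ℕ → ℝ)
    (ha_inf : Tendsto a atTop atTop)
    (ha_slow : Tendsto (fun n : ℕ => a n / Real.sqrt n) atTop (𝓝 0))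
    (b : Fin dg → EReal)
    (hb : ∀ j, Tendsto (fun n : ℕ => ((a n * g (βn n, πn n) j : ℝ) : EReal)) atTop (𝓝 (b j)))
    (hCQ : ∃ lam : Fin dβ → ℝ,
      (∀ j, b j + ((G (β₀, π₀) (lam, 0) j : ℝ) : EReal) ≤ 0) ∧
      (∀ j, b j + ((G (β₀, π₀) (lam, 0) j : ℝ) : EReal) < 0)) :
    PKTendsto
      (fun n : ℕ =>
        {p : (Fin dβ → ℝ) × (Fin dπ → ℝ) |
          ∃ q : (Fin dβ → ℝ) × (Fin dπ → ℝ), (∀ j, g q j ≤ 0) ∧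
            p = (a n • (q.1 - βn n), Real.sqrt n • (q.2 - πn n))})
      ({lam : Fin dβ → ℝ | ∀ j, b j + ((G (β₀, π₀) (lam, 0) j : ℝ) : EReal) ≤ 0}
        ×ˢ (Set.univ : Set (Fin dπ → ℝ))) := by
  have hg : HasStrictFDerivAt g (G (β₀, π₀)) (β₀, π₀) :=
    hasStrictFDerivAt_of_hasFDerivAt_of_continuousAt
      (eventually_of_mem (hU.mem_nhds hθ₀U) hderiv) (hGcont.continuousAt (hU.mem_nhds hθ₀U))
  have hΛ : (fun n : ℕ => {p : (Fin dβ → ℝ) × (Fin dπ → ℝ) | ∃ q : (Fin dβ → ℝ) × (Fin dπ → ℝ),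
      (∀ j, g q j ≤ 0) ∧ p = (a n • (q.1 - βn n), Real.sqrt n • (q.2 - πn n))}) =
      fun n => semiStrongScaling a βn πn n '' {q | ∀ j, g q j ≤ 0} := by
    ext n p
    exact exists_congr fun q => and_congr_right' eq_comm
  rw [hΛ]
  exact pkTendsto_of_pkLimsup_subset_of_subset_pkLiminf
    (pkLimsup_semiStrongScaling_subset hg ha_inf ha_slow hθn hb)
    (subset_pkLiminf_semiStrongScaling hg ha_inf ha_slow hθn hb (hCQ.imp fun _ => And.right))

/-- Semi-strong identification scaling of a parameter space defined by inequalities.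
With `Θ = {(β,π) : g(β,π) ≤ 0}`, `g` C¹ near `(β₀,π₀)` with derivative `G`
(`G_β λ = G(λ,0)`), `a_n → ∞`, `a_n/√n → 0`, `a_n g(β_n,π_n) → b ∈ [−∞,0]^{d_g}`
componentwise (in `EReal`), and the constraint qualification holding for every `j`
(automatic when `b_j = −∞`), the sets
`Λ_n^{SS} = {(a_n(β−β_n), √n(π−π_n)) : (β,π) ∈ Θ}` PK-converge to
`B^{SS} × ℝ^{d_π}` where `B^{SS} = {λ : b + G_β(β₀,π₀)λ ≤ 0}`. -/
theorem pk_semi_strong_scaling {dβ dπ dg : ℕ}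
    (g : ((Fin dβ → ℝ) × (Fin dπ → ℝ)) → (Fin dg → ℝ))
    (β₀ : Fin dβ → ℝ) (π₀ : Fin dπ → ℝ)
    (U : Set ((Fin dβ → ℝ) × (Fin dπ → ℝ))) (hU : IsOpen U) (hθ₀U : (β₀, π₀) ∈ U)
    (G : ((Fin dβ → ℝ) × (Fin dπ → ℝ)) →
      (((Fin dβ → ℝ) × (Fin dπ → ℝ)) →L[ℝ] (Fin dg → ℝ)))
    (hderiv : ∀ θ ∈ U, HasFDerivAt g (G θ) θ)
    (hGcont : ContinuousOn G U)
    (βn : ℕ → (Fin dβ → ℝ)) (πn : ℕ → (Fin dπ → ℝ))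
    (hθnΘ : ∀ n, ∀ j, g (βn n, πn n) j ≤ 0)
    (hθn : Tendsto (fun n => (βn n, πn n)) atTop (𝓝 (β₀, π₀)))
    (a : ℕ → ℝ) (ha_pos : ∀ n, 0 < a n)
    (ha_inf : Tendsto a atTop atTop)
    (ha_slow : Tendsto (fun n : ℕ => a n / Real.sqrt n) atTop (𝓝 0))
    (b : Fin dg → EReal) (hb_le : ∀ j, b j ≤ 0)
    (hb : ∀ j, Tendsto (fun n : ℕ => ((a n * g (βn n, πn n) j : ℝ) : EReal)) atTop (𝓝 (b j)))
    (hCQ : ∃ lam : Fin dβ → ℝ,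
      (∀ j, b j + ((G (β₀, π₀) (lam, 0) j : ℝ) : EReal) ≤ 0) ∧
      (∀ j, b j + ((G (β₀, π₀) (lam, 0) j : ℝ) : EReal) < 0)) :
    PKTendsto
      (fun n : ℕ =>
        {p : (Fin dβ → ℝ) × (Fin dπ → ℝ) |
          ∃ q : (Fin dβ → ℝ) × (Fin dπ → ℝ), (∀ j, g q j ≤ 0) ∧
            p = (a n • (q.1 - βn n), Real.sqrt n • (q.2 - πn n))})
      ({lam : Fin dβ → ℝ | ∀ j, b j + ((G (β₀, π₀) (lam, 0) j : ℝ) : EReal) ≤ 0}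
        ×ˢ (Set.univ : Set (Fin dπ → ℝ))) :=
  pk_semi_strong_scaling_general g β₀ π₀ U hU hθ₀U G hderiv hGcont βn πn hθn a ha_inf ha_slow b hb
    hCQ
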